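/- arXiv:2211.15087 — 5 statements merged into one kernel-verified Lean document; each statement's English description precedes it below -/
import Mathlib

section
/- Let r ≥ 1, let d_0, ..., d_r be real numbers, and for p ≥ 0 define C_p = (1/p!) ∑_{j=0}^r j^p d_j, and D_c = ∑_{j=0}^{r-c} d_j d_{j+c}. Then for every integer s ≥ 1, ∑_{c=1}^r c^{2s} D_c = (1/2) ∑_{t=0}^{2s} (-1)^{2s-t} binom(2s, t) · t! · (2s-t)! · C_t · C_{2s-t}. -/
/-! Since `t! C_t = ∑_j j^t d_j`, the binomial theorem turns the right-hand side into
`(1/2) ∑_{j,k} d_j d_k (j - k)^{2s}`. The summand is symmetric in `j, k` and vanishes on the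
diagonal, so the double sum is twice the sum over `j < k`, and grouping that sum by the lag
`c = k - j` gives `∑_c c^{2s} D_c`. -/

open Finset

theorem sum_range_sum_range_eq_sum_diag_add_sum_lt {M : Type*} [AddCommMonoid M]
    (f : ℕ → ℕ → M) (n : ℕ) :
    ∑ j ∈ range n, ∑ k ∈ range n, f j k =
      ∑ k ∈ range n, (f k k + ∑ j ∈ range k, (f j k + f k j)) := by
  induction n with
  | zero => simp
  | succ n ih =>
    simp only [sum_range_succ, sum_add_distrib] at ih ⊢
    rw [ih]
    abel

theorem sum_range_sum_lt_eq_sum_lag {M : Type*} [AddCommMonoid M] (g : ℕ → ℕ → M) (r : ℕ) :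
    ∑ k ∈ range (r + 1), ∑ j ∈ range k, g j k =
      ∑ c ∈ Icc 1 r, ∑ j ∈ range (r - c + 1), g j (j + c) := by
  rw [sum_sigma', sum_sigma']
  refine sum_nbij' (fun x ↦ ⟨x.1 - x.2, x.2⟩) (fun x ↦ ⟨x.2 + x.1, x.2⟩) ?_ ?_ ?_ ?_ ?_ <;>
    simp only [mem_sigma, mem_range, mem_Icc, Sigma.forall, Sigma.mk.injEq, heq_eq_eq]
  · lia
  · lia
  · lia
  · lia
  · intro k j hj
    rw [Nat.add_sub_cancel' hj.2.le]

theorem sum_choose_mul_moment_mul_moment {R ι : Type*} [CommRing R] (S : Finset ι)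
    (w x : ι → R) (n : ℕ) :
    ∑ t ∈ range (n + 1), (-1) ^ (n - t) * (n.choose t : R) *
        ((∑ j ∈ S, x j ^ t * w j) * ∑ k ∈ S, x k ^ (n - t) * w k) =
      ∑ j ∈ S, ∑ k ∈ S, w j * w k * (x j - x k) ^ n := by
  have hexpand : ∀ j k, w j * w k * (x j - x k) ^ n = ∑ t ∈ range (n + 1),
      (-1) ^ (n - t) * (n.choose t : R) * (x j ^ t * w j * (x k ^ (n - t) * w k)) := fun j k ↦ by
    rw [sub_eq_add_neg, add_pow, mul_sum]
    refine sum_congr rfl fun t _ ↦ ?_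
    rw [neg_pow]
    ring
  simp_rw [hexpand, sum_mul_sum, mul_sum]
  rw [sum_comm]
  exact sum_congr rfl fun j _ ↦ sum_comm

theorem sum_sum_mul_sub_pow_eq_two_mul_sum_lag (d : ℕ → ℝ) (r n : ℕ) (hn : n ≠ 0) :
    ∑ j ∈ range (r + 1), ∑ k ∈ range (r + 1), d j * d k * ((j : ℝ) - k) ^ (2 * n) =
      2 * ∑ c ∈ Icc 1 r, (c : ℝ) ^ (2 * n) * ∑ j ∈ range (r - c + 1), d j * d (j + c) := by
  rw [sum_range_sum_range_eq_sum_diag_add_sum_lt]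
  calc _ = ∑ k ∈ range (r + 1), ∑ j ∈ range k, 2 * (d j * d k * ((k : ℝ) - j) ^ (2 * n)) := by
        refine sum_congr rfl fun k _ ↦ ?_
        rw [sub_self, zero_pow (by lia), mul_zero, zero_add]
        refine sum_congr rfl fun j _ ↦ ?_
        rw [← neg_sub, (even_two_mul n).neg_pow]
        ring
    _ = ∑ c ∈ Icc 1 r, ∑ j ∈ range (r - c + 1),
          2 * (d j * d (j + c) * (((j + c : ℕ) : ℝ) - j) ^ (2 * n)) :=
        sum_range_sum_lt_eq_sum_lag _ r
    _ = _ := by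
        simp only [mul_sum]
        refine sum_congr rfl fun c _ ↦ sum_congr rfl fun j _ ↦ ?_
        push_cast
        ring

theorem weighted_lag_sum_eq_moment_expansion_general
    (r : ℕ) (d : ℕ → ℝ)
    (C : ℕ → ℝ) (hC : ∀ p, C p = (∑ j ∈ Finset.range (r + 1), (j : ℝ) ^ p * d j) / (Nat.factorial p))
    (D : ℕ → ℝ) (hD : ∀ c, D c = ∑ j ∈ Finset.range (r - c + 1), d j * d (j + c))
    (s : ℕ) (hs : 1 ≤ s) :
    ∑ c ∈ Finset.Icc 1 r, (c : ℝ) ^ (2 * s) * D c =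
      (1 / 2) * ∑ t ∈ Finset.range (2 * s + 1),
        (-1 : ℝ) ^ (2 * s - t) * (Nat.choose (2 * s) t : ℝ) *
          (Nat.factorial t : ℝ) * (Nat.factorial (2 * s - t) : ℝ) * C t * C (2 * s - t) := by
  have hmoment : ∀ p, (p.factorial : ℝ) * C p = ∑ j ∈ range (r + 1), (j : ℝ) ^ p * d j :=
    fun p ↦ by rw [hC, mul_div_cancel₀ _ (by positivity)]
  calc _ = (1 / 2) * (2 * ∑ c ∈ Icc 1 r, (c : ℝ) ^ (2 * s) *
        ∑ j ∈ range (r - c + 1), d j * d (j + c)) := by simp only [hD]; ring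
    _ = (1 / 2) * ∑ j ∈ range (r + 1), ∑ k ∈ range (r + 1),
          d j * d k * ((j : ℝ) - k) ^ (2 * s) := by
        rw [sum_sum_mul_sub_pow_eq_two_mul_sum_lag d r s (by lia)]
    _ = _ := by
        rw [← sum_choose_mul_moment_mul_moment]
        refine congrArg _ (sum_congr rfl fun t _ ↦ ?_)
        rw [← hmoment, ← hmoment]
        ring

theorem weighted_lag_sum_eq_moment_expansion
    (r : ℕ) (hr : 1 ≤ r) (d : ℕ → ℝ)
    (C : ℕ → ℝ) (hC : ∀ p, C p = (∑ j ∈ Finset.range (r + 1), (j : ℝ) ^ p * d j) / (Nat.factorial p))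
    (D : ℕ → ℝ) (hD : ∀ c, D c = ∑ j ∈ Finset.range (r - c + 1), d j * d (j + c))
    (s : ℕ) (hs : 1 ≤ s) :
    ∑ c ∈ Finset.Icc 1 r, (c : ℝ) ^ (2 * s) * D c =
      (1 / 2) * ∑ t ∈ Finset.range (2 * s + 1),
        (-1 : ℝ) ^ (2 * s - t) * (Nat.choose (2 * s) t : ℝ) *
          (Nat.factorial t : ℝ) * (Nat.factorial (2 * s - t) : ℝ) * C t * C (2 * s - t) :=
  weighted_lag_sum_eq_moment_expansion_general r d C hC D hD s hs
end

section
/- Let r ≥ 1 and let d_0, ..., d_r be real numbers with ∑_{j=0}^r d_j = 0. Then ∑_{c=1}^r c^2 D_c = -(∑_{j=0}^r j d_j)^2, where D_c = ∑_{j=0}^{r-c} d_j d_{j+c}. In particular, ∑_{c=1}^r c^2 D_c = 0 if and only if ∑_{j=0}^r j d_j = 0. -/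
/-!
Both sides come from the symmetric double sum `∑_{i,j} (i - j)² d_i d_j`. Grouping its terms
by the lag `c = |i - j|` gives `2 ∑_c c² D_c`; expanding the square gives
`2 ((∑ d_j)(∑ j² d_j) - (∑ j d_j)²)`, and the first product vanishes.
-/

open Finset

theorem sum_Icc_sum_range_lag_eq_sum_range_sum_range {M : Type*} [AddCommMonoid M]
    (g : ℕ → ℕ → M) (r : ℕ) :
    ∑ c ∈ Icc 1 r, ∑ j ∈ range (r - c + 1), g j (j + c) =
      ∑ k ∈ range (r + 1), ∑ j ∈ range k, g j k := by
  rw [sum_sigma', sum_sigma']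
  refine sum_nbij' (fun p => ⟨p.2 + p.1, p.2⟩) (fun q => ⟨q.1 - q.2, q.2⟩) ?_ ?_ ?_ ?_ ?_ <;>
    simp only [mem_sigma, mem_Icc, mem_range, Sigma.forall, Sigma.mk.injEq, heq_eq_eq, and_true,
      implies_true] <;>
    omega

theorem sum_range_sum_range_eq_two_nsmul_sum_lower {M : Type*} [AddCommMonoid M]
    (h : ℕ → ℕ → M) (h_symm : ∀ i j, h i j = h j i) (h_diag : ∀ i, h i i = 0) (n : ℕ) :
    ∑ i ∈ range n, ∑ j ∈ range n, h i j = 2 • ∑ k ∈ range n, ∑ j ∈ range k, h j k := by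
  induction n with
  | zero => simp
  | succ n ih =>
    have h_row : ∑ k ∈ range n, h n k = ∑ j ∈ range n, h j n :=
      sum_congr rfl fun k _ => h_symm n k
    simp only [sum_range_succ, sum_add_distrib, ih, h_row, h_diag, nsmul_add, two_nsmul]
    abel

theorem sum_sum_sub_sq_mul_mul {ι R : Type*} [CommRing R] (s : Finset ι) (x d : ι → R) :
    ∑ i ∈ s, ∑ j ∈ s, (x j - x i) ^ 2 * (d i * d j) =
      2 * ((∑ i ∈ s, d i) * (∑ i ∈ s, x i ^ 2 * d i) - (∑ i ∈ s, x i * d i) ^ 2) := by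
  have h_expand : ∀ i j, (x j - x i) ^ 2 * (d i * d j) =
      d i * (x j ^ 2 * d j) + x i ^ 2 * d i * d j - 2 * (x i * d i * (x j * d j)) := by
    intro i j; ring
  simp only [h_expand, sum_add_distrib, sum_sub_distrib, ← mul_sum, ← sum_mul,
    sq (∑ i ∈ s, x i * d i)]
  ring

theorem sum_Icc_sq_mul_lag_sum_eq_moments (r : ℕ) (d : ℕ → ℝ) :
    ∑ c ∈ Icc 1 r, (c : ℝ) ^ 2 * (∑ j ∈ range (r - c + 1), d j * d (j + c)) =
      (∑ j ∈ range (r + 1), d j) * (∑ j ∈ range (r + 1), (j : ℝ) ^ 2 * d j) -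
        (∑ j ∈ range (r + 1), (j : ℝ) * d j) ^ 2 := by
  set h : ℕ → ℕ → ℝ := fun j k => ((k : ℝ) - j) ^ 2 * (d j * d k)
  have h_lag : ∀ c j : ℕ, (c : ℝ) ^ 2 * (d j * d (j + c)) = h j (j + c) := by
    intro c j
    simp only [h]
    push_cast
    ring
  have h_double := sum_range_sum_range_eq_two_nsmul_sum_lower h
    (fun i j => by simp only [h]; ring) (fun i => by simp [h]) (r + 1)
  rw [sum_sum_sub_sq_mul_mul, ← sum_Icc_sum_range_lag_eq_sum_range_sum_range, two_nsmul] at h_double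
  calc _ = ∑ c ∈ Icc 1 r, ∑ j ∈ range (r - c + 1), h j (j + c) := by simp only [mul_sum, h_lag]
    _ = _ := by linarith

theorem sum_csq_lag_eq_neg_sq_first_moment_general
    (r : ℕ) (d : ℕ → ℝ)
    (hsum : ∑ j ∈ Finset.range (r + 1), d j = 0) :
    (∑ c ∈ Finset.Icc 1 r, (c : ℝ) ^ 2 * (∑ j ∈ Finset.range (r - c + 1), d j * d (j + c)) =
      -(∑ j ∈ Finset.range (r + 1), (j : ℝ) * d j) ^ 2) ∧
    ((∑ c ∈ Finset.Icc 1 r, (c : ℝ) ^ 2 * (∑ j ∈ Finset.range (r - c + 1), d j * d (j + c)) = 0) ↔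
      ∑ j ∈ Finset.range (r + 1), (j : ℝ) * d j = 0) := by
  have h_eq : ∑ c ∈ Icc 1 r, (c : ℝ) ^ 2 * (∑ j ∈ range (r - c + 1), d j * d (j + c)) =
      -(∑ j ∈ range (r + 1), (j : ℝ) * d j) ^ 2 := by
    rw [sum_Icc_sq_mul_lag_sum_eq_moments, hsum, zero_mul, zero_sub]
  exact ⟨h_eq, by rw [h_eq, neg_eq_zero, sq_eq_zero_iff]⟩

theorem sum_csq_lag_eq_neg_sq_first_moment
    (r : ℕ) (hr : 1 ≤ r) (d : ℕ → ℝ)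
    (hsum : ∑ j ∈ Finset.range (r + 1), d j = 0) :
    (∑ c ∈ Finset.Icc 1 r, (c : ℝ) ^ 2 * (∑ j ∈ Finset.range (r - c + 1), d j * d (j + c)) =
      -(∑ j ∈ Finset.range (r + 1), (j : ℝ) * d j) ^ 2) ∧
    ((∑ c ∈ Finset.Icc 1 r, (c : ℝ) ^ 2 * (∑ j ∈ Finset.range (r - c + 1), d j * d (j + c)) = 0) ↔
      ∑ j ∈ Finset.range (r + 1), (j : ℝ) * d j = 0) :=
  sum_csq_lag_eq_neg_sq_first_moment_general r d hsum
end

section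
/- Let r ≥ 1, let d_0, ..., d_r be real numbers with C_0 = ∑_{j=0}^r d_j = 0, and let 1 ≤ k ≤ r-1. Then the conditions C_1 = C_2 = ... = C_k = 0 hold if and only if ∑_{c=1}^r c^{2s} D_c = 0 for all s = 1, ..., k, where C_p = ∑_{j=0}^r j^p d_j / p! and D_c = ∑_{j=0}^{r-c} d_j d_{j+c}. -/
/-!
Write `M p = ∑ j^p d_j`, so that `C p = M p / p!`. Expanding `(i - j)^(2s)` by the binomial
theorem gives `∑_{i,j} (i - j)^(2s) d_i d_j = ∑_m (-1)^m (2s choose m) M m M (2s - m)`, while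
grouping the pairs `i < j` by their lag `c = j - i` shows that the same double sum equals
`2 ∑_c c^(2s) D c`. If `M 0 = ⋯ = M k = 0` and `s ≤ k`, every binomial term contains a factor
`M m` with `m ≤ k`. Conversely, by strong induction on `p ≤ k`: once `M 0, …, M (p-1)` vanish,
only the middle term `(-1)^p (2p choose p) (M p)^2` of the `s = p` identity survives.
-/

open Finset

variable {ι M R : Type*}

theorem Finset.sum_sum_eq_two_nsmul_sum_sum_lt [LinearOrder ι] [AddCommMonoid M]
    (s : Finset ι) (K : ι → ι → M) (hsymm : ∀ i j, K i j = K j i) (hdiag : ∀ i, K i i = 0) :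
    ∑ i ∈ s, ∑ j ∈ s, K i j = 2 • ∑ i ∈ s, ∑ j ∈ s with i < j, K i j := by
  have hge : ∀ i, ∑ j ∈ s with ¬ i < j, K i j = ∑ j ∈ s with j < i, K j i := fun i => by
    rw [← sum_subset (s₁ := s.filter (· < i))]
    · exact sum_congr rfl fun j _ => hsymm i j
    · intro j
      simp only [mem_filter]
      exact fun h => ⟨h.1, not_lt.2 h.2.le⟩
    · intro j hj hj'
      simp only [mem_filter, not_and, not_lt] at hj hj'
      rw [le_antisymm hj.2 (hj' hj.1), hdiag]
  calc ∑ i ∈ s, ∑ j ∈ s, K i j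
      = ∑ i ∈ s, ∑ j ∈ s with i < j, K i j + ∑ i ∈ s, ∑ j ∈ s with j < i, K j i := by
        rw [← sum_add_distrib]
        exact sum_congr rfl fun i _ => by rw [← hge, sum_filter_add_sum_filter_not]
    _ = 2 • ∑ i ∈ s, ∑ j ∈ s with i < j, K i j := by
        rw [two_nsmul]
        congr 1
        exact sum_comm' fun i j => by simp only [mem_filter]; tauto

theorem sum_sum_lt_eq_sum_lag [Semiring R] (r : ℕ) (w : ℕ → R) (d : ℕ → R) :
    ∑ i ∈ range (r + 1), ∑ j ∈ range (r + 1) with i < j, w (j - i) * (d i * d j) =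
      ∑ c ∈ Icc 1 r, w c * ∑ j ∈ range (r - c + 1), d j * d (j + c) := by
  simp only [mul_sum, sum_sigma']
  refine sum_nbij' (fun p => ⟨p.2 - p.1, p.1⟩) (fun q => ⟨q.2, q.2 + q.1⟩) ?_ ?_ ?_ ?_ ?_ <;>
    simp only [mem_sigma, mem_filter, mem_range, mem_Icc, Sigma.forall]
  · omega
  · omega
  · intro i j h
    congr
    omega
  · intro c j _
    simp
  · intro i j h
    rw [Nat.add_sub_cancel' h.2.2.le]

section CommRing

variable [CommRing R]

theorem sum_sum_sub_pow_two_mul_eq_two_mul_sum_lag (r : ℕ) {s : ℕ} (hs : s ≠ 0) (d : ℕ → R) :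
    ∑ i ∈ range (r + 1), ∑ j ∈ range (r + 1), ((i : R) - j) ^ (2 * s) * (d i * d j) =
      2 * ∑ c ∈ Icc 1 r, (c : R) ^ (2 * s) * ∑ j ∈ range (r - c + 1), d j * d (j + c) := by
  have heven : Even (2 * s) := even_two_mul s
  rw [sum_sum_eq_two_nsmul_sum_sum_lt, ← sum_sum_lt_eq_sum_lag, nsmul_eq_mul, Nat.cast_ofNat]
  · congr 1
    refine sum_congr rfl fun i _ => sum_congr rfl fun j hj => ?_
    rw [Nat.cast_sub (mem_filter.1 hj).2.le, ← neg_sub, heven.neg_pow]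
  · intro i j
    rw [← neg_sub, heven.neg_pow, mul_comm (d i)]
  · intro i
    rw [sub_self, zero_pow (by omega), zero_mul]

def powerMoment (s : Finset ι) (x f : ι → R) (p : ℕ) : R :=
  ∑ i ∈ s, x i ^ p * f i

def signedBinomialConvolution (M : ℕ → R) (n : ℕ) : R :=
  ∑ m ∈ range (n + 1), (-1) ^ (m + n) * n.choose m * M m * M (n - m)

theorem sum_sum_sub_pow_mul_eq_signedBinomialConvolution (s : Finset ι) (x f : ι → R) (n : ℕ) :
    ∑ i ∈ s, ∑ j ∈ s, (x i - x j) ^ n * (f i * f j) =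
      signedBinomialConvolution (powerMoment s x f) n := by
  simp only [signedBinomialConvolution, powerMoment, sub_pow, sum_mul, mul_sum]
  rw [sum_comm]
  refine (sum_congr rfl fun _ _ => sum_comm).trans ?_
  rw [sum_comm]
  exact sum_congr rfl fun m _ => sum_congr rfl fun _ _ => sum_congr rfl fun _ _ => by ring

theorem signedBinomialConvolution_eq_zero {M : ℕ → R} {k n : ℕ} (hM : ∀ p ≤ k, M p = 0)
    (hn : n ≤ 2 * k) : signedBinomialConvolution M n = 0 := by
  refine sum_eq_zero fun m hm => ?_
  rcases le_or_gt m k with hmk | hkm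
  · rw [hM m hmk]; ring
  · rw [hM (n - m) (by omega)]; ring

theorem signedBinomialConvolution_two_mul {M : ℕ → R} {p : ℕ} (hM : ∀ m < p, M m = 0) :
    signedBinomialConvolution M (2 * p) = (-1) ^ p * (2 * p).choose p * M p ^ 2 := by
  rw [signedBinomialConvolution, sum_eq_single_of_mem p (by simp; omega)]
  · rw [pow_add, pow_mul, neg_one_sq, one_pow, show 2 * p - p = p by omega]
    ring
  · intro m hm hmp
    rw [mem_range] at hm
    rcases lt_or_gt_of_ne hmp with hlt | hgt
    · rw [hM m hlt]; ring
    · rw [hM (2 * p - m) (by omega)]; ring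

theorem forall_le_eq_zero_iff_signedBinomialConvolution [NoZeroDivisors R] [CharZero R]
    {M : ℕ → R} (hM0 : M 0 = 0) (k : ℕ) :
    (∀ p ≤ k, M p = 0) ↔ ∀ s, 1 ≤ s → s ≤ k → signedBinomialConvolution M (2 * s) = 0 := by
  refine ⟨fun hM s _ hsk => signedBinomialConvolution_eq_zero hM (by omega), fun h p => ?_⟩
  induction p using Nat.strong_induction_on with
  | _ p ih =>
    intro hpk
    rcases Nat.eq_zero_or_pos p with rfl | hp
    · exact hM0
    have hconv := h p hp hpk
    rw [signedBinomialConvolution_two_mul fun m hm => ih m hm (by omega)] at hconv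
    have hchoose : ((2 * p).choose p : R) ≠ 0 := Nat.cast_ne_zero.2 (Nat.choose_pos (by omega)).ne'
    simpa [hchoose] using hconv

end CommRing

theorem moment_constraints_iff_weighted_lag_constraints_general
    (r : ℕ) (d : ℕ → ℝ)
    (C : ℕ → ℝ) (hC : ∀ p, C p = (∑ j ∈ Finset.range (r + 1), (j : ℝ) ^ p * d j) / (Nat.factorial p))
    (D : ℕ → ℝ) (hD : ∀ c, D c = ∑ j ∈ Finset.range (r - c + 1), d j * d (j + c))
    (hC0 : C 0 = 0)
    (k : ℕ) :
    (∀ p, 1 ≤ p → p ≤ k → C p = 0) ↔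
      (∀ s, 1 ≤ s → s ≤ k → ∑ c ∈ Finset.Icc 1 r, (c : ℝ) ^ (2 * s) * D c = 0) := by
  set M := powerMoment (range (r + 1)) (fun j : ℕ => (j : ℝ)) d
  have hCM : ∀ p, C p = 0 ↔ M p = 0 := fun p => by
    simp [hC, M, powerMoment, Nat.factorial_ne_zero]
  have hlag : ∀ s, 1 ≤ s →
      (∑ c ∈ Icc 1 r, (c : ℝ) ^ (2 * s) * D c = 0 ↔ signedBinomialConvolution M (2 * s) = 0) :=
    fun s hs => by
      rw [← sum_sum_sub_pow_mul_eq_signedBinomialConvolution,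
        sum_sum_sub_pow_two_mul_eq_two_mul_sum_lag r (by omega)]
      simp [hD]
  calc (∀ p, 1 ≤ p → p ≤ k → C p = 0) ↔ ∀ p ≤ k, M p = 0 := by
        refine ⟨fun h p hpk => ?_, fun h p _ hpk => (hCM p).2 (h p hpk)⟩
        rcases Nat.eq_zero_or_pos p with rfl | hp
        exacts [(hCM 0).1 hC0, (hCM p).1 (h p hp hpk)]
    _ ↔ _ := forall_le_eq_zero_iff_signedBinomialConvolution ((hCM 0).1 hC0) k
    _ ↔ _ := forall₂_congr fun s hs => imp_congr_right fun _ => (hlag s hs).symm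

theorem moment_constraints_iff_weighted_lag_constraints
    (r : ℕ) (hr : 1 ≤ r) (d : ℕ → ℝ)
    (C : ℕ → ℝ) (hC : ∀ p, C p = (∑ j ∈ Finset.range (r + 1), (j : ℝ) ^ p * d j) / (Nat.factorial p))
    (D : ℕ → ℝ) (hD : ∀ c, D c = ∑ j ∈ Finset.range (r - c + 1), d j * d (j + c))
    (hC0 : C 0 = 0)
    (k : ℕ) (hk1 : 1 ≤ k) (hkr : k ≤ r - 1) :
    (∀ p, 1 ≤ p → p ≤ k → C p = 0) ↔
      (∀ s, 1 ≤ s → s ≤ k → ∑ c ∈ Finset.Icc 1 r, (c : ℝ) ^ (2 * s) * D c = 0) :=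
  moment_constraints_iff_weighted_lag_constraints_general r d C hC D hD hC0 k
end

section
/- Let r ≥ 1 and let d_0, ..., d_r be any real numbers satisfying ∑_{j=0}^r d_j = 0 and ∑_{j=0}^r d_j^2 = 1. Then δ(r) = ∑_{c=1}^r (∑_{j=0}^{r-c} d_j d_{j+c})^2 ≥ 1/(4r), with equality if and only if ∑_{j=0}^{r-c} d_j d_{j+c} = -1/(2r) for every c = 1, ..., r. -/
/-!
Summing the autocorrelations `D_c = ∑ⱼ d_j d_{j+c}` over all lags `c = 1, …, r` counts every
product `d_j d_k` with `j < k` once, so `2 ∑_c D_c = (∑ d_j)² - ∑ d_j² = -1`. The `r` numbers `D_c`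
thus have mean `-1/(2r)`, and `∑ D_c² = (∑ D_c)²/r + ∑ (D_c + 1/(2r))²` gives the bound together
with its equality case.
-/

open Finset

namespace Finset

theorem two_mul_sum_range_mul_sum_range {R : Type*} [CommRing R] (f : ℕ → R) (n : ℕ) :
    2 * ∑ k ∈ range n, f k * ∑ j ∈ range k, f j =
      (∑ k ∈ range n, f k) ^ 2 - ∑ k ∈ range n, f k ^ 2 := by
  induction n with
  | zero => simp
  | succ n ih =>
    simp only [sum_range_succ, mul_add]
    rw [ih]
    ring

theorem sum_Icc_sum_range_sub_add_one {M : Type*} [AddCommMonoid M] (g : ℕ → ℕ → M) (n : ℕ) :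
    ∑ c ∈ Icc 1 n, ∑ j ∈ range (n - c + 1), g j (j + c) =
      ∑ k ∈ range (n + 1), ∑ j ∈ range k, g j k := by
  rw [sum_sigma', sum_sigma']
  refine sum_bij' (fun p _ => ⟨p.2 + p.1, p.2⟩) (fun p _ => ⟨p.1 - p.2, p.2⟩) ?_ ?_ ?_ ?_ ?_
  all_goals
    rintro ⟨a, b⟩ h
    simp only [mem_sigma, mem_Icc, mem_range] at h ⊢
  · omega
  · omega
  all_goals simp only [Sigma.mk.injEq, heq_eq_eq, and_true]; omega

theorem two_mul_sum_autocorrelation {R : Type*} [CommRing R] (d : ℕ → R) (n : ℕ) :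
    2 * ∑ c ∈ Icc 1 n, ∑ j ∈ range (n - c + 1), d j * d (j + c) =
      (∑ j ∈ range (n + 1), d j) ^ 2 - ∑ j ∈ range (n + 1), d j ^ 2 := by
  rw [sum_Icc_sum_range_sub_add_one (fun j k => d j * d k), ← two_mul_sum_range_mul_sum_range]
  simp only [mul_sum, mul_comm]

variable {ι K : Type*}

theorem sum_sub_mean_sq [Field K] [CharZero K] (s : Finset ι) (f : ι → K) :
    ∑ i ∈ s, (f i - (∑ j ∈ s, f j) / #s) ^ 2 = ∑ i ∈ s, f i ^ 2 - (∑ i ∈ s, f i) ^ 2 / #s := by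
  obtain rfl | hs := s.eq_empty_or_nonempty
  · simp
  have hcard : (#s : K) ≠ 0 := Nat.cast_ne_zero.mpr hs.card_ne_zero
  simp only [sub_sq, sum_add_distrib, sum_sub_distrib, ← sum_mul, ← mul_sum, sum_const, nsmul_eq_mul]
  field_simp
  ring

variable [Field K] [LinearOrder K] [IsStrictOrderedRing K]

theorem sq_sum_div_card_le_sum_sq (s : Finset ι) (f : ι → K) :
    (∑ i ∈ s, f i) ^ 2 / #s ≤ ∑ i ∈ s, f i ^ 2 := by
  have := sum_sub_mean_sq s f ▸ sum_nonneg fun i _ => sq_nonneg (f i - (∑ j ∈ s, f j) / #s)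
  linarith

theorem sum_sq_eq_sq_sum_div_card_iff (s : Finset ι) (f : ι → K) :
    ∑ i ∈ s, f i ^ 2 = (∑ i ∈ s, f i) ^ 2 / #s ↔ ∀ i ∈ s, f i = (∑ j ∈ s, f j) / #s := by
  rw [← sub_eq_zero, ← sum_sub_mean_sq, sum_eq_zero_iff_of_nonneg fun i _ => sq_nonneg _]
  simp only [sq_eq_zero_iff, sub_eq_zero]

end Finset

theorem delta_ge_inv_four_r_general
    (r : ℕ) (d : ℕ → ℝ)
    (hsum : ∑ j ∈ Finset.range (r + 1), d j = 0)
    (hnorm : ∑ j ∈ Finset.range (r + 1), (d j) ^ 2 = 1) :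
    (1 / (4 * (r : ℝ)) ≤
        ∑ c ∈ Finset.Icc 1 r, (∑ j ∈ Finset.range (r - c + 1), d j * d (j + c)) ^ 2) ∧
    ((∑ c ∈ Finset.Icc 1 r, (∑ j ∈ Finset.range (r - c + 1), d j * d (j + c)) ^ 2 =
        1 / (4 * (r : ℝ))) ↔
      ∀ c ∈ Finset.Icc 1 r,
        (∑ j ∈ Finset.range (r - c + 1), d j * d (j + c)) = -(1 / (2 * (r : ℝ)))) := by
  set D : ℕ → ℝ := fun c => ∑ j ∈ range (r - c + 1), d j * d (j + c)
  have hD : ∑ c ∈ Icc 1 r, D c = -(1 / 2) := by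
    have := two_mul_sum_autocorrelation d r
    rw [hsum, hnorm] at this
    linarith
  have hcard : (#(Icc 1 r) : ℝ) = r := by simp
  have hbound : (∑ c ∈ Icc 1 r, D c) ^ 2 / #(Icc 1 r) = 1 / (4 * r) := by
    rw [hD, hcard]; ring
  have hmean : (∑ c ∈ Icc 1 r, D c) / #(Icc 1 r) = -(1 / (2 * r)) := by
    rw [hD, hcard]; ring
  refine ⟨hbound ▸ sq_sum_div_card_le_sum_sq _ D, ?_⟩
  rw [← hbound, sum_sq_eq_sq_sum_div_card_iff, hmean]

theorem delta_ge_inv_four_r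
    (r : ℕ) (hr : 1 ≤ r) (d : ℕ → ℝ)
    (hsum : ∑ j ∈ Finset.range (r + 1), d j = 0)
    (hnorm : ∑ j ∈ Finset.range (r + 1), (d j) ^ 2 = 1) :
    (1 / (4 * (r : ℝ)) ≤
        ∑ c ∈ Finset.Icc 1 r, (∑ j ∈ Finset.range (r - c + 1), d j * d (j + c)) ^ 2) ∧
    ((∑ c ∈ Finset.Icc 1 r, (∑ j ∈ Finset.range (r - c + 1), d j * d (j + c)) ^ 2 =
        1 / (4 * (r : ℝ))) ↔
      ∀ c ∈ Finset.Icc 1 r,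
        (∑ j ∈ Finset.range (r - c + 1), d j * d (j + c)) = -(1 / (2 * (r : ℝ)))) :=
  delta_ge_inv_four_r_general r d hsum hnorm
end

section
/- Let r ≥ 1 and define d_j = (-1)^j binom(r, j) / binom(2r, r)^{1/2} for j = 0, ..., r. Then δ_ord(r) := ∑_{c=1}^r (∑_{j=0}^{r-c} d_j d_{j+c})^2 = (1/2) [ binom(4r, 2r) / binom(2r, r)^2 - 1 ]. -/
/-!
Vandermonde's identity turns each correlation `D_c = ∑ⱼ d_j d_{j+c}` into
`(-1)^c binom(2r, r-c) / binom(2r, r)`. Hence `δ(r) · binom(2r, r)^2` is the sum of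
`binom(2r, k)^2` over `k < r`, which by the symmetry `k ↦ 2r - k` of row `2r` of Pascal's
triangle is half of `∑ₖ binom(2r, k)^2 - binom(2r, r)^2 = binom(4r, 2r) - binom(2r, r)^2`.
-/

open Finset

namespace Nat

theorem sum_range_choose_mul_choose_add (m n c : ℕ) (hc : c ≤ n) :
    ∑ j ∈ range (n - c + 1), m.choose j * n.choose (j + c) = (m + n).choose (n - c) := by
  rw [add_choose_eq, Finset.Nat.sum_antidiagonal_eq_sum_range_succ_mk]
  refine sum_congr rfl fun j hj => ?_
  rw [mem_range] at hj
  rw [← choose_symm (by omega : j + c ≤ n)]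
  congr 2
  omega

end Nat

theorem Finset.sum_range_two_mul_add_one_of_symm {M : Type*} [AddCommMonoid M] (f : ℕ → M)
    (n : ℕ) (hf : ∀ k ≤ 2 * n, f (2 * n - k) = f k) :
    ∑ k ∈ range (2 * n + 1), f k = 2 • ∑ k ∈ range n, f k + f n := by
  have upper_half : ∑ k ∈ range n, f (n + 1 + k) = ∑ k ∈ range n, f k := by
    rw [← sum_range_reflect f n]
    refine sum_congr rfl fun k hk => ?_
    rw [mem_range] at hk
    rw [← hf _ (by omega)]
    congr 1
    omega
  rw [show 2 * n + 1 = n + 1 + n by ring, sum_range_add, upper_half, sum_range_succ]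
  abel

theorem Nat.choose_four_mul_two_mul (r : ℕ) :
    (4 * r).choose (2 * r) = 2 * ∑ k ∈ range r, ((2 * r).choose k) ^ 2 + ((2 * r).choose r) ^ 2 := by
  rw [show 4 * r = 2 * (2 * r) by ring, ← sum_range_choose_sq,
    sum_range_two_mul_add_one_of_symm _ r fun k hk => by rw [choose_symm hk], smul_eq_mul]

theorem ordinary_difference_sequence_correlation (r c : ℕ) (hc : c ≤ r) (d : ℕ → ℝ)
    (hd : ∀ j, d j = (-1 : ℝ) ^ j * (Nat.choose r j : ℝ) / Real.sqrt (Nat.choose (2 * r) r)) :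
    ∑ j ∈ range (r - c + 1), d j * d (j + c) =
      (-1) ^ c * ((2 * r).choose (r - c) : ℝ) / (2 * r).choose r := by
  have hB : (0 : ℝ) ≤ (2 * r).choose r := Nat.cast_nonneg _
  have hsign : ∀ j, (-1 : ℝ) ^ j * (-1) ^ (j + c) = (-1) ^ c := fun j => by
    rw [pow_add, ← mul_assoc, ← mul_pow]
    norm_num
  have hterm : ∀ j, d j * d (j + c) =
      (-1) ^ c * ((r.choose j * r.choose (j + c) : ℕ) : ℝ) / (2 * r).choose r := fun j => by
    rw [hd, hd, div_mul_div_comm, Real.mul_self_sqrt hB, ← hsign j]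
    push_cast
    ring
  simp only [hterm, ← sum_div, ← mul_sum]
  rw [← Nat.cast_sum, Nat.sum_range_choose_mul_choose_add r r c hc, two_mul]

theorem ordinary_difference_sequence_delta_general
    (r : ℕ) (d : ℕ → ℝ)
    (hd : ∀ j, d j = (-1 : ℝ) ^ j * (Nat.choose r j : ℝ) / Real.sqrt (Nat.choose (2 * r) r)) :
    ∑ c ∈ Finset.Icc 1 r, (∑ j ∈ Finset.range (r - c + 1), d j * d (j + c)) ^ 2 =
      (1 / 2) * ((Nat.choose (4 * r) (2 * r) : ℝ) / (Nat.choose (2 * r) r : ℝ) ^ 2 - 1) := by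
  have hB : ((2 * r).choose r : ℝ) ≠ 0 := by
    exact_mod_cast (Nat.choose_pos (by omega : r ≤ 2 * r)).ne'
  have hsq : ∀ c ∈ Icc 1 r, (∑ j ∈ range (r - c + 1), d j * d (j + c)) ^ 2 =
      ((2 * r).choose (r - c) : ℝ) ^ 2 / ((2 * r).choose r : ℝ) ^ 2 := fun c hc => by
    rw [ordinary_difference_sequence_correlation r c (mem_Icc.mp hc).2 d hd, div_pow, mul_pow,
      ← pow_mul, mul_comm c, pow_mul]
    norm_num
  have hreflect : ∑ c ∈ Icc 1 r, ((2 * r).choose (r - c) : ℝ) ^ 2 =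
      ∑ k ∈ range r, ((2 * r).choose k : ℝ) ^ 2 := by
    rw [← Ico_add_one_right_eq_Icc,
      sum_Ico_reflect (fun k => ((2 * r).choose k : ℝ) ^ 2) 1 le_rfl]
    simp [Nat.Ico_zero_eq_range]
  rw [sum_congr rfl hsq, ← sum_div, hreflect, Nat.choose_four_mul_two_mul]
  push_cast
  field_simp
  ring

theorem ordinary_difference_sequence_delta
    (r : ℕ) (hr : 1 ≤ r) (d : ℕ → ℝ)
    (hd : ∀ j, d j = (-1 : ℝ) ^ j * (Nat.choose r j : ℝ) / Real.sqrt (Nat.choose (2 * r) r)) :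
    ∑ c ∈ Finset.Icc 1 r, (∑ j ∈ Finset.range (r - c + 1), d j * d (j + c)) ^ 2 =
      (1 / 2) * ((Nat.choose (4 * r) (2 * r) : ℝ) / (Nat.choose (2 * r) r : ℝ) ^ 2 - 1) :=
  ordinary_difference_sequence_delta_general r d hd
end
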